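/- arXiv:2305.18039 — 4 statements merged into one kernel-verified Lean document; each statement's English description precedes it below -/
import Mathlib

section
/- Let E be a finite set with a collection N of subsets of E, all of size r, with the property that no two distinct members of N agree on all but one element (equivalently, any two distinct members have at most r−2 common elements). Then the collection of subsets I of E such that I is not a superset of any member of N and |I| ≤ r, together with the condition that subsets of size r are independent iff they are not in N, forms the independent sets of a matroid of rank r (assuming |E| ≥ r and N is not all r-subsets). -/
/-!
Two `r`-sets sharing `r - 1` points cannot both lie in `N`. Hence every `(r - 1)`-set has at
most one extension in `N`: among the extensions by points of an `r`-set `J ∉ N` one avoids `N`,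
which is the exchange axiom, and any smaller set extends, through an `(r - 1)`-set with two
free extensions, to an `r`-set outside `N`.
-/

open Finset

namespace SparsePaving

variable {α : Type*} {r : ℕ} {N : Finset (Finset α)} {I J S T B : Finset α}

def Indep (r : ℕ) (N : Finset (Finset α)) (I : Finset α) : Prop :=
  I.card ≤ r ∧ ∃ B : Finset α, I ⊆ B ∧ B.card = r ∧ B ∉ N

theorem indep_of_card_eq (hB : B.card = r) (hBN : B ∉ N) : Indep r N B :=
  ⟨hB.le, B, subset_rfl, hB, hBN⟩

theorem Indep.subset (hJ : Indep r N J) (hIJ : I ⊆ J) : Indep r N I :=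
  let ⟨hJr, B, hJB, hB⟩ := hJ
  ⟨(card_le_card hIJ).trans hJr, B, hIJ.trans hJB, hB⟩

theorem Indep.notMem_of_card_eq (hB : Indep r N B) (hBr : B.card = r) : B ∉ N := by
  obtain ⟨-, B', hBB', hB'r, hB'N⟩ := hB
  rwa [eq_of_subset_of_card_le hBB' (by omega)]

theorem Indep.exists_superset_card_eq (hI : Indep r N I) :
    ∃ B, I ⊆ B ∧ Indep r N B ∧ B.card = r :=
  let ⟨_, B, hIB, hB, hBN⟩ := hI
  ⟨B, hIB, indep_of_card_eq hB hBN, hB⟩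

variable [DecidableEq α]

def IsSparse (r : ℕ) (N : Finset (Finset α)) : Prop :=
  ∀ B ∈ N, ∀ B' ∈ N, B ≠ B' → (B ∩ B').card ≤ r - 2

theorem IsSparse.insert_notMem_or_insert_notMem (hN : IsSparse r N) (hT : r - 2 < T.card)
    {a b : α} (ha : a ∉ T) (hab : a ≠ b) : insert a T ∉ N ∨ insert b T ∉ N := by
  by_contra! h
  have hne : insert a T ≠ insert b T := fun he => by
    have : a ∈ insert b T := he ▸ mem_insert_self a T
    simp_all
  have := hN _ h.1 _ h.2 hne
  have := card_le_card (subset_inter (subset_insert a T) (subset_insert b T))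
  omega

theorem IsSparse.indep_of_card_lt (hN : IsSparse r N) {B₀ : Finset α}
    (hB₀ : B₀.card = r) (hB₀N : B₀ ∉ N) (hS : S.card < r) : Indep r N S := by
  refine ⟨hS.le, ?_⟩
  by_cases hSB₀ : S ⊆ B₀
  · exact ⟨B₀, hSB₀, hB₀, hB₀N⟩
  -- Now `S ∪ B₀` has more than `r` points, so some `(r - 1)`-set `T` between `S` and
  -- `S ∪ B₀` has two one-point extensions inside `S ∪ B₀`.
  have hSne : S.Nonempty := nonempty_iff_ne_empty.2 fun h => hSB₀ (h ▸ empty_subset _)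
  have hU : r < (S ∪ B₀).card :=
    hB₀ ▸ card_lt_card ⟨subset_union_right, fun h => hSB₀ (subset_union_left.trans h)⟩
  obtain ⟨T, hST, hTU, hT⟩ :=
    exists_subsuperset_card_eq (subset_union_left (s₂ := B₀)) (show S.card ≤ r - 1 by omega)
      (by omega)
  have : 1 < ((S ∪ B₀) \ T).card := by rw [card_sdiff_of_subset hTU]; omega
  obtain ⟨a, ha, b, hb, hab⟩ := one_lt_card.1 this
  rw [mem_sdiff] at ha hb
  have hTr : r - 2 < T.card := by have := hSne.card_pos; omega
  rcases hN.insert_notMem_or_insert_notMem hTr ha.2 hab with h | h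
  · exact ⟨insert a T, hST.trans (subset_insert _ _), by rw [card_insert_of_notMem ha.2]; omega,
      h⟩
  · exact ⟨insert b T, hST.trans (subset_insert _ _), by rw [card_insert_of_notMem hb.2]; omega,
      h⟩

theorem IsSparse.exists_insert_notMem (hN : IsSparse r N) (hI : I.card + 1 = r)
    (hJ : J.card = r) (hJN : J ∉ N) : ∃ x ∈ J \ I, insert x I ∉ N := by
  obtain ⟨x, hxJ, hxI⟩ := exists_mem_notMem_of_card_lt_card (show I.card < J.card by omega)
  have hxJI : x ∈ J \ I := mem_sdiff.2 ⟨hxJ, hxI⟩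
  by_cases hxN : insert x I ∉ N
  · exact ⟨x, hxJI, hxN⟩
  -- `J` is an `r`-set other than `insert x I`, so it has a point `y` outside it.
  have hcard : (insert x I).card = J.card := by rw [card_insert_of_notMem hxI]; omega
  obtain ⟨y, hyJ, hyxI⟩ :=
    not_subset.1 fun h => hJN (eq_of_subset_of_card_le h hcard.le ▸ not_not.1 hxN)
  obtain ⟨hyx, hyI⟩ : y ≠ x ∧ y ∉ I := by simpa using hyxI
  have : 2 ≤ r :=
    hJ ▸ card_pair hyx ▸ card_le_card (insert_subset hyJ (singleton_subset_iff.2 hxJ))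
  rcases hN.insert_notMem_or_insert_notMem (by omega) hyI hyx with h | h
  · exact ⟨y, mem_sdiff.2 ⟨hyJ, hyI⟩, h⟩
  · exact absurd h hxN

theorem IsSparse.indep_exchange (hN : IsSparse r N) {B₀ : Finset α}
    (hB₀ : B₀.card = r) (hB₀N : B₀ ∉ N) (hJ : Indep r N J)
    (hIJ : I.card < J.card) : ∃ x ∈ J \ I, Indep r N (insert x I) := by
  have hJr := hJ.1
  by_cases hIr : I.card + 1 < r
  · obtain ⟨x, hxJ, hxI⟩ := exists_mem_notMem_of_card_lt_card hIJ
    have := card_insert_le x I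
    exact ⟨x, mem_sdiff.2 ⟨hxJ, hxI⟩, hN.indep_of_card_lt hB₀ hB₀N (by omega)⟩
  · have hJN : J ∉ N := hJ.notMem_of_card_eq (by omega)
    obtain ⟨x, hx, hxN⟩ := hN.exists_insert_notMem (I := I) (by omega) (by omega) hJN
    have hxr : (insert x I).card = r := by rw [card_insert_of_notMem (mem_sdiff.1 hx).2]; omega
    exact ⟨x, hx, indep_of_card_eq hxr hxN⟩

end SparsePaving

open SparsePaving in
theorem sparse_paving_matroid_general {α : Type*} [DecidableEq α]
    (r : ℕ)
    (N : Finset (Finset α))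
    (hfar : ∀ B ∈ N, ∀ B' ∈ N, B ≠ B' → (B ∩ B').card ≤ r - 2)
    (hnotall : ∃ B : Finset α, B.card = r ∧ B ∉ N) :
    -- the independence predicate
    let Indep : Finset α → Prop := fun I =>
      I.card ≤ r ∧ ∃ B : Finset α, I ⊆ B ∧ B.card = r ∧ B ∉ N
    -- matroid axioms
    (Indep ∅) ∧
    (∀ I J, Indep J → I ⊆ J → Indep I) ∧
    (∀ I J, Indep I → Indep J → I.card < J.card →
      ∃ x ∈ J \ I, Indep (insert x I)) ∧
    -- rank is r: every independent set extends to one of size r, none is larger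
    (∀ I, Indep I → ∃ B, I ⊆ B ∧ Indep B ∧ B.card = r) := by
  obtain ⟨B₀, hB₀, hB₀N⟩ := hnotall
  have hN : IsSparse r N := hfar
  exact ⟨(indep_of_card_eq hB₀ hB₀N).subset (empty_subset _),
    fun _ _ hJ hIJ => Indep.subset hJ hIJ,
    fun _ _ _ hJ hIJ => hN.indep_exchange hB₀ hB₀N hJ hIJ,
    fun _ hI => Indep.exists_superset_card_eq hI⟩

/-- Let `N` be a family of `r`-subsets of a finite set `E` such
that distinct members intersect in at most `r − 2` elements, `N` is not all
`r`-subsets, and `|E| ≥ r`. Declaring `I` independent iff `|I| ≤ r` and `I` is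
contained in some `r`-subset not in `N`, the independent sets satisfy the
matroid axioms (so they define a matroid of rank `r`). -/
theorem sparse_paving_matroid {α : Type*} [DecidableEq α] [Fintype α]
    (r : ℕ) (hr : r ≤ Fintype.card α)
    (N : Finset (Finset α)) (hcard : ∀ B ∈ N, B.card = r)
    (hfar : ∀ B ∈ N, ∀ B' ∈ N, B ≠ B' → (B ∩ B').card ≤ r - 2)
    (hnotall : ∃ B : Finset α, B.card = r ∧ B ∉ N) :
    -- the independence predicate
    let Indep : Finset α → Prop := fun I =>
      I.card ≤ r ∧ ∃ B : Finset α, I ⊆ B ∧ B.card = r ∧ B ∉ N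
    -- matroid axioms
    (Indep ∅) ∧
    (∀ I J, Indep J → I ⊆ J → Indep I) ∧
    (∀ I J, Indep I → Indep J → I.card < J.card →
      ∃ x ∈ J \ I, Indep (insert x I)) ∧
    -- rank is r: every independent set extends to one of size r, none is larger
    (∀ I, Indep I → ∃ B, I ⊆ B ∧ Indep B ∧ B.card = r) :=
  sparse_paving_matroid_general r N hfar hnotall
end

section
/- Let T be a finite rooted tree where every non-leaf node has at least two children, and fix for each non-leaf node a chosen child. Then one can assign weights from ℤ/3ℤ to the leaves of T so that for every non-leaf node x, the weight of the subtree of the chosen child of x (the sum of leaf weights in that subtree) is strictly greater, under the order 0 < 1 < 2 on representatives, than the weight of the subtree of every other child of x; moreover, the total weight of T can be made equal to any prescribed element of ℤ/3ℤ. -/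
/-- A finite rooted tree whose internal nodes each have a distinguished
("chosen") child plus at least one further child (so at least two children),
and whose leaves carry labels from `α`. -/
inductive CTree (α : Type) where
  | leaf : α → CTree α
  | node : CTree α → (n : ℕ) → (Fin (n + 1) → CTree α) → CTree α

namespace CTree

/-- The weight of a tree with `ZMod 3`-weighted leaves: the sum of leaf weights. -/
def weight : CTree (ZMod 3) → ZMod 3
  | .leaf a => a
  | .node c n f => weight c + ∑ i : Fin (n + 1), weight (f i)

/-- The underlying shape of a tree (forgetting leaf labels). -/
def shape {α : Type} : CTree α → CTree Unit
  | .leaf _ => .leaf ()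
  | .node c n f => .node (shape c) n fun i => shape (f i)

/-- At every internal node, the weight of the chosen child's subtree is strictly
greater (under the order `0 < 1 < 2` on representatives) than the weight of
every other child's subtree. -/
def Good : CTree (ZMod 3) → Prop
  | .leaf _ => True
  | .node c n f => Good c ∧ (∀ i, Good (f i)) ∧
      ∀ i : Fin (n + 1), (weight (f i)).val < (weight c).val

/-- The chosen child gets `c` (`a` if `a ≠ 0`, else `2`), the first sibling `a - c`, the others `0`. -/
theorem exists_child_weights (n : ℕ) (a : ZMod 3) :
    ∃ (c : ZMod 3) (w : Fin (n + 1) → ZMod 3), c + ∑ i, w i = a ∧ ∀ i, (w i).val < c.val := by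
  obtain ⟨c, hrest, hpos⟩ : ∃ c : ZMod 3, (a - c).val < c.val ∧ 0 < c.val := by
    revert a; decide
  refine ⟨c, Pi.single 0 (a - c), by simp, fun i => ?_⟩
  rcases eq_or_ne i 0 with rfl | hi
  · simpa using hrest
  · simpa [hi] using hpos

end CTree

/-- For every shape of a finite rooted tree in which each
internal node has at least two children and a chosen child, and every prescribed
total weight `a ∈ ℤ/3ℤ`, there is an assignment of weights from `ℤ/3ℤ` to the
leaves such that at every internal node the chosen child's subtree outweighs
all its siblings (under `0 < 1 < 2`), and the total weight equals `a`. -/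
theorem exists_good_weighting (s : CTree Unit) (a : ZMod 3) :
    ∃ t : CTree (ZMod 3), t.shape = s ∧ t.Good ∧ t.weight = a := by
  induction s generalizing a with
  | leaf => exact ⟨.leaf a, rfl, trivial, rfl⟩
  | node c n f ihc ihf =>
    obtain ⟨b, w, hsum, hlt⟩ := CTree.exists_child_weights n a
    obtain ⟨tc, rfl, hgood_c, rfl⟩ := ihc b
    choose tf hshape hgood hweight using fun i => ihf i (w i)
    refine ⟨.node tc n tf, ?_, ⟨hgood_c, hgood, ?_⟩, ?_⟩
    · simp only [CTree.shape, hshape]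
    · simpa only [hweight] using hlt
    · simpa only [CTree.weight, hweight] using hsum
end

section
/- Let 𝔽 be a finite field, and let M be a matroid on finite ground set E represented by v : E → W. For a partition E = X₁ ⊔ X₂, define two subsets Y, Y' ⊆ X₁ to be equivalent if for every Z ⊆ X₂, the sum of vectors over Y ∪ Z is zero iff the sum over Y' ∪ Z is zero. Then the number of equivalence classes is at most 1 + |𝔽|^(dim(span(v(X₁)) ∩ span(v(X₂)))). -/
/-!
Call `Y ⊆ X₁` completable if `s(Y) + s(Z) = 0` for some `Z ⊆ X₂`. Then `s(Y) = -s(Z)` lies in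
`span v(X₁) ⊓ span v(X₂)`, and the class of a completable `Y` is determined by `s(Y)`, while the
sets that are not completable satisfy none of the equations and so form a single class. Hence
there are at most `1 + |span v(X₁) ⊓ span v(X₂)|` classes.
-/

theorem Nat.card_quot_le_of_eq_imp_rel {α β : Type*} [Finite β] {r : α → α → Prop} (c : α → β)
    (hc : ∀ a a', c a = c a' → r a a') : Nat.card (Quot r) ≤ Nat.card β := by
  have hsurj : Function.Surjective fun y : Set.range c => Quot.mk r y.2.choose :=
    Quot.ind fun a => ⟨⟨c a, a, rfl⟩, Quot.sound (hc _ _ (Set.mem_range_self a).choose_spec)⟩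
  exact (Nat.card_le_card_of_surjective _ hsurj).trans (Finite.card_subtype_le _)

theorem card_quot_add_eq_zero_le {α β W : Type*} [AddGroup W] (f : α → W) (P : β → Prop)
    (g : β → W) (S : Set W) [Finite S] (hS : ∀ a z, P z → f a + g z = 0 → f a ∈ S) :
    Nat.card (Quot fun a a' : α => ∀ z, P z → (f a + g z = 0 ↔ f a' + g z = 0)) ≤
      1 + Nat.card S := by
  classical
  let c : α → Option S := fun a =>
    if h : ∃ z, P z ∧ f a + g z = 0 then some ⟨f a, h.elim fun z hz => hS a z hz.1 hz.2⟩
    else none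
  calc _ ≤ Nat.card (Option S) := Nat.card_quot_le_of_eq_imp_rel c ?_
    _ = 1 + Nat.card S := by rw [Finite.card_option, add_comm]
  intro a a' hc z hz
  by_cases ha : ∃ z, P z ∧ f a + g z = 0 <;> by_cases ha' : ∃ z, P z ∧ f a' + g z = 0
  · simp only [c, dif_pos ha, dif_pos ha', Option.some.injEq, Subtype.mk.injEq] at hc
    rw [hc]
  · simp [c, dif_pos ha, dif_neg ha'] at hc
  · simp [c, dif_neg ha, dif_pos ha'] at hc
  · exact iff_of_false (fun h => ha ⟨z, hz, h⟩) (fun h => ha' ⟨z, hz, h⟩)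

theorem sensitivity_le_connectivity_bound_general {𝔽 W E : Type*} [Field 𝔽] [Fintype 𝔽]
    [AddCommGroup W] [Module 𝔽 W]
    (v : E → W) (X₁ X₂ : Finset E) :
    Nat.card (Quot fun Y Y' : {Y : Finset E // Y ⊆ X₁} =>
        ∀ Z : Finset E, Z ⊆ X₂ →
          (((∑ e ∈ Y.1, v e) + ∑ e ∈ Z, v e = 0) ↔
            ((∑ e ∈ Y'.1, v e) + ∑ e ∈ Z, v e = 0))) ≤
      1 + Fintype.card 𝔽 ^
        Module.finrank 𝔽
          ((Submodule.span 𝔽 (v '' ↑X₁)) ⊓ (Submodule.span 𝔽 (v '' ↑X₂)) :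
            Submodule 𝔽 W) := by
  have sum_mem_span {X Y : Finset E} (hY : Y ⊆ X) :
      ∑ e ∈ Y, v e ∈ Submodule.span 𝔽 (v '' ↑X) :=
    Submodule.sum_mem _ fun e he => Submodule.subset_span ⟨e, hY he, rfl⟩
  set S := Submodule.span 𝔽 (v '' ↑X₁) ⊓ Submodule.span 𝔽 (v '' ↑X₂)
  have := FiniteDimensional.span_of_finite 𝔽 (X₁.finite_toSet.image v)
  have : Finite S := Module.finite_of_finite 𝔽
  rw [Fintype.card_eq_nat_card, ← Module.natCard_eq_pow_finrank]
  refine card_quot_add_eq_zero_le _ _ _ (S : Set W) fun Y Z hZ h => ⟨sum_mem_span Y.2, ?_⟩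
  rw [eq_neg_of_add_eq_zero_left h]
  exact neg_mem (sum_mem_span hZ)

/-- For a represented matroid `v : E → W` over a finite field
`𝔽` and a partition `E = X₁ ⊔ X₂`, call `Y, Y' ⊆ X₁` equivalent when for every
`Z ⊆ X₂` the sum over `Y ∪ Z` is zero iff the sum over `Y' ∪ Z` is zero. The
number of equivalence classes is at most
`1 + |𝔽| ^ dim(span(v(X₁)) ∩ span(v(X₂)))`. -/
theorem sensitivity_le_connectivity_bound {𝔽 W E : Type*} [Field 𝔽] [Fintype 𝔽]
    [AddCommGroup W] [Module 𝔽 W] [FiniteDimensional 𝔽 W]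
    [Fintype E] [DecidableEq E]
    (v : E → W) (X₁ X₂ : Finset E)
    (hdisj : Disjoint X₁ X₂) (hunion : X₁ ∪ X₂ = Finset.univ) :
    Nat.card (Quot fun Y Y' : {Y : Finset E // Y ⊆ X₁} =>
        ∀ Z : Finset E, Z ⊆ X₂ →
          (((∑ e ∈ Y.1, v e) + ∑ e ∈ Z, v e = 0) ↔
            ((∑ e ∈ Y'.1, v e) + ∑ e ∈ Z, v e = 0))) ≤
      1 + Fintype.card 𝔽 ^
        Module.finrank 𝔽
          ((Submodule.span 𝔽 (v '' ↑X₁)) ⊓ (Submodule.span 𝔽 (v '' ↑X₂)) :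
            Submodule 𝔽 W) :=
  sensitivity_le_connectivity_bound_general v X₁ X₂
end

section
/- For every finite monoid M there exists k such that every finite sequence of elements of M is the yield of some factorization tree of height at most k (Simon's Factorization Forest Theorem, with the standard bound k = 3|M|). -/
/-!
Simon's argument through Green's relations, here with the bound `|M| (|M|² (4|M| + 2) + 2)`.

Factorizations compose: if every block `uᵢ` of `w = u₁ ⋯ uₙ` is the yield of a factorization
tree of height `k` and the word of block products `u₁.prod ⋯ uₙ.prod` is the yield of one of
height `h`, substituting the former for the leaves of the latter gives one of height `h + k`.

* If all infix products of `w` lie in one H-class, cut `w` after its first letter and wherever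
  the prefix product returns to its value `g` there. The blocks between two cuts have products
  `x` with `g * x = g`, which forces `x` to be the idempotent of the H-class; inside a block the
  prefix product avoids `g`, so induction on the set of prefix products applies.
* If all infix products of `w` are J-equivalent (`w` is smooth), cut at every occurrence of the
  pair `(a, b)` of the first two letters. By stability, a block from `b` to `a` has its product in
  `L(a) ∩ R(b)`, as has every product of consecutive blocks, so the previous case factors the
  sequence of block products; the blocks themselves avoid the adjacent pair `(a, b)`, so
  induction on the set of adjacent pairs applies.
* In general, with `d = w.prod`, cut `w` greedily into minimal blocks with product `≤_J d`. The
  sequence of block products is smooth, while a block without its last letter (and the leftover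
  tail) has all its infix products outside the J-ideal of `d`; induction on the set of infix
  products applies.
-/

/-- A finite ordered rooted tree with leaves labelled by elements of `M`. -/
inductive FTree (M : Type*) where
  | leaf : M → FTree M
  | node : (n : ℕ) → (Fin n → FTree M) → FTree M

namespace FTree

variable {M : Type*} [Monoid M]

/-- The (implicit) label of a tree: the ordered product of its leaf labels. -/
def label : FTree M → M
  | .leaf m => m
  | .node n f => (List.ofFn fun i : Fin n => label (f i)).prod

/-- The yield: the left-to-right sequence of leaf labels. -/
def yield : FTree M → List M
  | .leaf m => [m]
  | .node n f => (List.ofFn fun i : Fin n => yield (f i)).flatten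

/-- The height: the maximum number of edges on a root-to-leaf path. -/
def height : FTree M → ℕ
  | .leaf _ => 0
  | .node n f => (Finset.univ.sup fun i : Fin n => height (f i)) + 1

/-- A factorization tree: at every node with at least 3 children, all children
have the same label, and that label is idempotent. -/
def Valid : FTree M → Prop
  | .leaf _ => True
  | .node n f => (∀ i, Valid (f i)) ∧
      (3 ≤ n → ∃ e : M, e * e = e ∧ ∀ i, label (f i) = e)

end FTree

namespace List

variable {α β : Type*}

theorem IsChain.and {R S : α → α → Prop} {l : List α} (hR : l.IsChain R) (hS : l.IsChain S) :
    l.IsChain fun x y => R x y ∧ S x y := by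
  induction hR with
  | nil => exact .nil
  | singleton => exact .singleton _
  | cons_cons hr _ ih => exact .cons_cons ⟨hr, hS.rel⟩ (ih hS.tail)

theorem exists_flatten_eq_of_map_eq_flatten {f : α → β} :
    ∀ {L : List (List β)} {l : List α}, l.map f = L.flatten →
      ∃ ls : List (List α), ls.flatten = l ∧ ls.map (map f) = L
  | [], l, h => ⟨[], by simpa using h.symm, rfl⟩
  | x :: L, l, h => by
    obtain ⟨l₁, l₂, rfl, rfl, h₂⟩ := map_eq_append_iff.1 (h.trans flatten_cons)
    obtain ⟨ls, rfl, rfl⟩ := exists_flatten_eq_of_map_eq_flatten h₂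
    exact ⟨l₁ :: ls, by simp, by simp⟩

theorem exists_greedy_split (P : List α → Prop) (w : List α) :
    ∃ (Cs : List (List α)) (r : List α), w = Cs.flatten ++ r ∧
      (∀ C ∈ Cs, C ≠ [] ∧ P C ∧ ∀ p, p <+: C.dropLast → p ≠ [] → ¬ P p) ∧
      ∀ p, p <+: r → p ≠ [] → ¬ P p := by
  classical
  induction h : w.length using Nat.strong_induction_on generalizing w with
  | _ n ih =>
  by_cases hP : ∃ m, 0 < m ∧ m ≤ w.length ∧ P (w.take m)
  · obtain ⟨hm, hmw, hPm⟩ := Nat.find_spec hP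
    obtain ⟨Cs, r, hw, hCs, hr⟩ := ih _ (by rw [length_drop]; omega) (w.drop (Nat.find hP)) rfl
    refine ⟨w.take (Nat.find hP) :: Cs, r, by simp [← hw], ?_, hr⟩
    rintro C (_ | ⟨_, hC⟩)
    · refine ⟨ne_nil_of_length_pos (by rw [length_take]; omega), hPm, fun p hp hp0 hPp => ?_⟩
      have hpw : p <+: w := hp.trans ((dropLast_prefix _).trans (take_prefix _ _))
      have hlen : p.length < Nat.find hP := by
        have := hp.length_le
        rw [length_dropLast, length_take] at this
        omega
      exact Nat.find_min hP hlen
        ⟨length_pos_iff.2 hp0, hpw.length_le, prefix_iff_eq_take.1 hpw ▸ hPp⟩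
    · exact hCs C hC
  · refine ⟨[], w, by simp, by simp, fun p hp hp0 hPp => hP ?_⟩
    exact ⟨p.length, length_pos_iff.2 hp0, hp.length_le, prefix_iff_eq_take.1 hp ▸ hPp⟩

theorem exists_split_at_pair (a b : α) (u : List α) :
    ∃ (Cs : List (List α)) (D : List α), b :: u = Cs.flatten ++ D ∧
      (∀ C ∈ Cs, C.head? = some b ∧ C.getLast? = some a ∧
        C.IsChain fun x y => ¬(x = a ∧ y = b)) ∧
      D.head? = some b ∧ D.IsChain fun x y => ¬(x = a ∧ y = b) := by
  induction u using List.reverseRecOn with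
  | nil => exact ⟨[], [b], by simp, by simp, rfl, .singleton _⟩
  | append_singleton u x ih =>
    obtain ⟨Cs, D, hu, hCs, hD, hDc⟩ := ih
    by_cases hcut : D.getLast? = some a ∧ x = b
    · obtain ⟨hDa, rfl⟩ := hcut
      refine ⟨Cs ++ [D], [x], by simp [← cons_append, hu], ?_, rfl, .singleton _⟩
      simp only [mem_append, mem_singleton]
      rintro C (hC | rfl)
      exacts [hCs C hC, ⟨hD, hDa, hDc⟩]
    · refine ⟨Cs, D ++ [x], by simp [← cons_append, hu], hCs, by simp [hD],
        hDc.append (.singleton _) ?_⟩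
      simp only [Option.mem_def, head?_cons, Option.some.injEq]
      rintro y hy _ rfl ⟨rfl, rfl⟩
      exact hcut ⟨hy, rfl⟩

theorem head?_getLast?_flatten {a b : α} {Ls : List (List α)} (hLs : Ls ≠ [])
    (h : ∀ l ∈ Ls, l.head? = some b ∧ l.getLast? = some a) :
    Ls.flatten.head? = some b ∧ Ls.flatten.getLast? = some a := by
  induction Ls with
  | nil => contradiction
  | cons l Ls ih =>
    obtain ⟨hb, ha⟩ := h l (by simp)
    rcases eq_or_ne Ls [] with rfl | hLs'
    · simpa using ⟨hb, ha⟩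
    · obtain ⟨-, ha'⟩ := ih hLs' fun l' hl' => h l' (by simp [hl'])
      simp [head?_append, getLast?_append, hb, ha']

end List

theorem FTree.label_eq_prod_yield {M : Type*} [Monoid M] (t : FTree M) :
    t.label = t.yield.prod := by
  induction t with
  | leaf m => simp [label, yield]
  | node n f ih => simp [label, yield, List.prod_flatten, List.map_ofFn, Function.comp_def, ih]

namespace FactorizationForest

variable {M : Type*} [Monoid M]

def LLe (x y : M) : Prop := ∃ m, x = m * y

def RLe (x y : M) : Prop := ∃ m, x = y * m

def JLe (x y : M) : Prop := ∃ u v, x = u * y * v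

def JClass (d : M) : Set M := {z | JLe z d ∧ JLe d z}

def HClass (a b : M) : Set M := {z | LLe z a ∧ LLe a z ∧ RLe z b ∧ RLe b z}

theorem LLe.trans {x y z : M} : LLe x y → LLe y z → LLe x z
  | ⟨m, hm⟩, ⟨n, hn⟩ => ⟨m * n, by rw [hm, hn, mul_assoc]⟩

theorem RLe.trans {x y z : M} : RLe x y → RLe y z → RLe x z
  | ⟨m, hm⟩, ⟨n, hn⟩ => ⟨n * m, by rw [hm, hn, mul_assoc]⟩

theorem JLe.refl (x : M) : JLe x x := ⟨1, 1, by simp⟩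

theorem JLe.trans {x y z : M} : JLe x y → JLe y z → JLe x z
  | ⟨u, v, huv⟩, ⟨u', v', huv'⟩ =>
    ⟨u * u', v' * v, by rw [huv, huv']; simp only [mul_assoc]⟩

theorem jLe_mul_left (x y : M) : JLe (x * y) y := ⟨x, 1, by simp⟩

theorem jLe_mul_right (x y : M) : JLe (x * y) x := ⟨1, y, by simp⟩

theorem eq_pow_mul_mul_pow {a u v : M} (h : a = u * a * v) (n : ℕ) :
    a = u ^ n * a * v ^ n := by
  induction n with
  | zero => simp
  | succ n ih =>
    calc a = u ^ n * (u * a * v) * v ^ n := by rw [← h]; exact ih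
      _ = u ^ (n + 1) * a * v ^ (n + 1) := by rw [pow_succ, pow_succ']; simp only [mul_assoc]

theorem exists_pow_mul_eq_self [Finite M] {a u v : M} (h : a = u * a * v) :
    ∃ n, 0 < n ∧ u ^ n * a = a ∧ a * v ^ n = a := by
  obtain ⟨i, j, hij, hpow⟩ := Finite.exists_ne_map_eq_of_infinite fun n : ℕ => (u ^ n, v ^ n)
  wlog hlt : i < j generalizing i j
  · exact this j i hij.symm hpow.symm (by omega)
  obtain ⟨hu, hv⟩ := Prod.mk.inj hpow
  obtain ⟨p, rfl⟩ := Nat.exists_eq_add_of_lt hlt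
  refine ⟨p + 1, p.succ_pos, ?_, ?_⟩
  · calc u ^ (p + 1) * a = u ^ (p + 1) * (u ^ i * a * v ^ i) := by rw [← eq_pow_mul_mul_pow h]
      _ = u ^ (i + p + 1) * a * v ^ i := by
        rw [← mul_assoc, ← mul_assoc, ← pow_add, show p + 1 + i = i + p + 1 by omega]
      _ = a := by rw [← hu, ← eq_pow_mul_mul_pow h]
  · calc a * v ^ (p + 1) = u ^ i * a * v ^ i * v ^ (p + 1) := by rw [← eq_pow_mul_mul_pow h]
      _ = u ^ i * a * v ^ (i + p + 1) := by rw [mul_assoc _ (v ^ i), ← pow_add, ← add_assoc]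
      _ = a := by rw [← hv, ← eq_pow_mul_mul_pow h]

-- The stability of finite monoids, on both sides.
theorem lLe_of_jLe_mul_left [Finite M] {a y : M} (h : JLe a (y * a)) : LLe a (y * a) := by
  obtain ⟨u, v, huv⟩ := h
  obtain ⟨n, hn, hna, -⟩ := exists_pow_mul_eq_self (u := u * y) (v := v)
    (by simpa only [mul_assoc] using huv)
  refine ⟨(u * y) ^ (n - 1) * u, ?_⟩
  calc a = (u * y) ^ (n - 1 + 1) * a := by rw [Nat.sub_add_cancel hn, hna]
    _ = (u * y) ^ (n - 1) * u * (y * a) := by simp only [pow_succ, mul_assoc]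

theorem rLe_of_jLe_mul_right [Finite M] {a y : M} (h : JLe a (a * y)) : RLe a (a * y) := by
  obtain ⟨u, v, huv⟩ := h
  obtain ⟨n, hn, -, hna⟩ := exists_pow_mul_eq_self (u := u) (v := y * v)
    (by simpa only [mul_assoc] using huv)
  refine ⟨v * (y * v) ^ (n - 1), ?_⟩
  calc a = a * (y * v) ^ (n - 1 + 1) := by rw [Nat.sub_add_cancel hn, hna]
    _ = a * y * (v * (y * v) ^ (n - 1)) := by simp only [pow_succ', mul_assoc]

theorem mul_self_eq_of_mul_eq_left {g x : M} (hx : LLe x g) (h : g * x = g) : x * x = x := by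
  obtain ⟨m, rfl⟩ := hx
  rw [mul_assoc, h]

theorem eq_of_idempotent {e f : M} (he : e * e = e) (hf : f * f = f) (hfe : LLe f e)
    (hef : RLe e f) : e = f := by
  obtain ⟨u, hu⟩ := hfe
  obtain ⟨v, hv⟩ := hef
  calc e = f * e := by rw [hv, ← mul_assoc, hf]
    _ = f := by rw [hu, mul_assoc, he]

theorem HClass.exists_idempotent_of_mul_eq {a b g : M} (hg : g ∈ HClass a b) {xs : List M}
    (hxs : ∀ x ∈ xs, x ∈ HClass a b ∧ g * x = g) : ∃ e : M, e * e = e ∧ ∀ x ∈ xs, x = e := by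
  rcases xs with _ | ⟨x₀, xs⟩
  · exact ⟨1, mul_one 1, by simp⟩
  obtain ⟨hx₀, hgx₀⟩ := hxs x₀ (by simp)
  have hidem := mul_self_eq_of_mul_eq_left (hx₀.1.trans hg.2.1) hgx₀
  refine ⟨x₀, hidem, fun x hx => ?_⟩
  obtain ⟨hx, hgx⟩ := hxs x hx
  exact eq_of_idempotent (mul_self_eq_of_mul_eq_left (hx.1.trans hg.2.1) hgx) hidem
    (hx₀.1.trans hx.2.1) (hx.2.2.1.trans hx₀.2.2.2)

def HasFactorization (k : ℕ) (w : List M) : Prop :=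
  ∃ t : FTree M, t.Valid ∧ t.yield = w ∧ t.height ≤ k

theorem HasFactorization.mono {k l : ℕ} {w : List M} (h : HasFactorization k w) (hkl : k ≤ l) :
    HasFactorization l w :=
  let ⟨t, ht, hy, hh⟩ := h
  ⟨t, ht, hy, hh.trans hkl⟩

theorem hasFactorization_singleton (a : M) : HasFactorization 0 [a] :=
  ⟨.leaf a, trivial, rfl, le_rfl⟩

theorem hasFactorization_flatten {k : ℕ} {us : List (List M)}
    (hus : ∀ u ∈ us, HasFactorization k u)
    (hidem : 3 ≤ us.length → ∃ e : M, e * e = e ∧ ∀ u ∈ us, u.prod = e) :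
    HasFactorization (k + 1) us.flatten := by
  choose t hvalid hyield hheight using hus
  refine ⟨.node us.length fun i => t us[i] (List.getElem_mem _),
    ⟨fun i => hvalid _ _, fun h3 => ?_⟩, ?_, ?_⟩
  · obtain ⟨e, he, hprod⟩ := hidem h3
    refine ⟨e, he, fun i => ?_⟩
    rw [FTree.label_eq_prod_yield, hyield]
    exact hprod _ (List.getElem_mem _)
  · simp only [FTree.yield, hyield, Fin.getElem_fin, List.ofFn_getElem]
  · simpa only [FTree.height, add_le_add_iff_right] using Finset.sup_le fun i _ => hheight _ _

theorem hasFactorization_append {k : ℕ} {u v : List M} (hu : u ≠ [] → HasFactorization k u)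
    (hv : v ≠ [] → HasFactorization k v) (huv : u ++ v ≠ []) :
    HasFactorization (k + 1) (u ++ v) := by
  rcases eq_or_ne u [] with rfl | hu'
  · exact (hv (by simpa using huv)).mono k.le_succ
  rcases eq_or_ne v [] with rfl | hv'
  · simpa using (hu hu').mono k.le_succ
  simpa using hasFactorization_flatten (us := [u, v]) (by simp [hu hu', hv hv']) (by simp)

theorem hasFactorization_of_dropLast {k : ℕ} {w : List M} (hw : w ≠ [])
    (h : w.dropLast ≠ [] → HasFactorization k w.dropLast) : HasFactorization (k + 1) w := by
  rw [← List.dropLast_append_getLast hw]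
  exact hasFactorization_append h (fun _ => (hasFactorization_singleton _).mono k.zero_le)
    (by simp)

theorem HasFactorization.flatten_of_prods {h k : ℕ} {ws : List (List M)}
    (hout : HasFactorization h (ws.map List.prod)) (hin : ∀ u ∈ ws, HasFactorization k u) :
    HasFactorization (h + k) ws.flatten := by
  obtain ⟨t, ht, hy, hh⟩ := hout
  suffices ∀ t : FTree M, t.Valid → ∀ ws : List (List M), t.yield = ws.map List.prod →
      (∀ u ∈ ws, HasFactorization k u) → HasFactorization (t.height + k) ws.flatten from
    (this t ht ws hy hin).mono (by omega)
  intro t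
  induction t with
  | leaf m =>
    intro _ ws hy hin
    obtain ⟨u, rfl, -⟩ := List.map_eq_singleton_iff.1 hy.symm
    simpa [FTree.height] using hin u (by simp)
  | node n f ih =>
    rintro ⟨hvalid, hidem⟩ ws hy hin
    obtain ⟨wss, rfl, hwss⟩ := List.exists_flatten_eq_of_map_eq_flatten hy.symm
    have hchild : ∀ vs ∈ wss, ∃ i, (f i).yield = vs.map List.prod := by
      intro vs hvs
      have := hwss ▸ List.mem_map_of_mem (f := List.map List.prod) hvs
      simpa [List.mem_ofFn] using this
    rw [List.flatten_flatten]
    refine (hasFactorization_flatten (k := (Finset.univ.sup fun i => (f i).height) + k) ?_ ?_).mono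
      (by simp only [FTree.height]; omega)
    · simp only [List.mem_map]
      rintro _ ⟨vs, hvs, rfl⟩
      obtain ⟨i, hi⟩ := hchild vs hvs
      refine (ih i (hvalid i) vs hi fun u hu =>
        hin u (List.mem_flatten.2 ⟨vs, hvs, hu⟩)).mono ?_
      gcongr
      exact Finset.le_sup (f := fun i => (f i).height) (Finset.mem_univ i)
    · intro h3
      have hlen : wss.length = n := by simpa using congrArg List.length hwss
      obtain ⟨e, he, hlabel⟩ := hidem (by simpa [hlen] using h3)
      refine ⟨e, he, ?_⟩
      simp only [List.mem_map]
      rintro _ ⟨vs, hvs, rfl⟩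
      obtain ⟨i, hi⟩ := hchild vs hvs
      rw [List.prod_flatten, ← hi, ← FTree.label_eq_prod_yield, hlabel]

def InfixProdsIn (S : Set M) (w : List M) : Prop :=
  ∀ u, u <:+: w → u ≠ [] → u.prod ∈ S

def PrefixProdsIn (c : M) (V : Set M) (w : List M) : Prop :=
  ∀ u, u <+: w → u ≠ [] → c * u.prod ∈ V

theorem InfixProdsIn.infix {S : Set M} {v w : List M} (h : InfixProdsIn S w) (hv : v <:+: w) :
    InfixProdsIn S v :=
  fun u hu => h u (hu.trans hv)

theorem InfixProdsIn.mem {S : Set M} {w : List M} (h : InfixProdsIn S w) {a : M} (ha : a ∈ w) :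
    a ∈ S := by
  simpa using h [a] ((List.singleton_infix_iff a w).2 ha) (by simp)

theorem InfixProdsIn.prefixProdsIn {S : Set M} {w : List M} (h : InfixProdsIn S w) :
    PrefixProdsIn 1 S w :=
  fun u hu hu0 => by simpa using h u hu.isInfix hu0

theorem infixProdsIn_map_prod {S : Set M} {Cs : List (List M)}
    (h : ∀ Ds, Ds <:+: Cs → Ds ≠ [] → Ds.flatten.prod ∈ S) :
    InfixProdsIn S (Cs.map List.prod) := by
  intro u hu hu0
  obtain ⟨Ds, hDs, rfl⟩ := List.infix_map_iff.1 hu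
  rw [← List.prod_flatten]
  exact h Ds hDs (by simpa using hu0)

theorem PrefixProdsIn.left {c : M} {V : Set M} {u v : List M} (h : PrefixProdsIn c V (u ++ v)) :
    PrefixProdsIn c V u :=
  fun p hp => h p (hp.trans (List.prefix_append u v))

theorem PrefixProdsIn.right {c : M} {V : Set M} {u v : List M} (h : PrefixProdsIn c V (u ++ v)) :
    PrefixProdsIn (c * u.prod) V v := fun p hp hp0 => by
  simpa [mul_assoc] using h (u ++ p) ((List.prefix_append_right_inj u).2 hp) (by simp [hp0])

theorem PrefixProdsIn.of_flatten_append {c : M} {V : Set M} {Cs : List (List M)} {D : List M}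
    (h : PrefixProdsIn c V (Cs.flatten ++ D)) (hCs : ∀ C ∈ Cs, c * C.prod = c) :
    (∀ C ∈ Cs, PrefixProdsIn c V C) ∧ PrefixProdsIn c V D := by
  induction Cs with
  | nil => simpa using h
  | cons C Cs ih =>
    rw [List.flatten_cons, List.append_assoc] at h
    have hrest := ih (hCs C (by simp) ▸ h.right) fun C' hC' => hCs C' (by simp [hC'])
    refine ⟨?_, hrest.2⟩
    simp only [List.mem_cons]
    rintro C' (rfl | hC')
    exacts [h.left, hrest.1 C' hC']

theorem not_jLe_prod_of_infix {d : M} {v z : List M}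
    (h : ∀ p, p <+: v → p ≠ [] → ¬ JLe p.prod d) (hz : z <:+: v) (hz0 : z ≠ []) :
    ¬ JLe z.prod d := by
  obtain ⟨s, t, rfl⟩ := hz
  intro hzd
  refine h (s ++ z) (List.prefix_append _ _) (by simp [hz0]) ?_
  rw [List.prod_append]
  exact (jLe_mul_left _ _).trans hzd

theorem jLe_prod_of_infix {v w : List M} (h : v <:+: w) : JLe w.prod v.prod := by
  obtain ⟨s, t, rfl⟩ := h
  exact ⟨s.prod, t.prod, by simp [List.prod_append, mul_assoc]⟩

theorem mem_hClass_of_infixProdsIn_jClass [Finite M] {a b d : M} {w : List M}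
    (hw : InfixProdsIn (JClass d) w) (hb : w.head? = some b) (ha : w.getLast? = some a) :
    w.prod ∈ HClass a b := by
  have hd : JLe d w.prod := (hw w (List.infix_refl w) (by rintro rfl; simp at hb)).2
  have haJ := (hw.mem (List.mem_of_getLast? ha)).1.trans hd
  have hbJ := (hw.mem (List.mem_of_head? hb)).1.trans hd
  obtain ⟨y, hy⟩ := List.getLast?_eq_some_iff.1 ha
  obtain ⟨z, hz⟩ := List.head?_eq_some_iff.1 hb
  have hya : w.prod = y.prod * a := by rw [hy, List.prod_append, List.prod_singleton]
  have hbz : w.prod = b * z.prod := by rw [hz, List.prod_cons]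
  refine ⟨⟨y.prod, hya⟩, ?_, ⟨z.prod, hbz⟩, ?_⟩
  · rw [hya] at haJ ⊢
    exact lLe_of_jLe_mul_left haJ
  · rw [hbz] at hbJ ⊢
    exact rLe_of_jLe_mul_right hbJ

theorem hasFactorization_of_infixProdsIn_hClass [Finite M] {a b : M} (V : Finset M)
    (hV : ↑V ⊆ HClass a b) (c : M) {w : List M} (hw : w ≠ [])
    (hH : InfixProdsIn (HClass a b) w) (hc : PrefixProdsIn c ↑V w) :
    HasFactorization (4 * V.card) w := by
  classical
  induction V using Finset.strongInduction generalizing c w with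
  | H V ih =>
  obtain ⟨x, w', rfl⟩ := List.exists_cons_of_ne_nil hw
  set g := c * x
  have hg : g ∈ V := by simpa using hc [x] (by simp) (by simp)
  have hc' : PrefixProdsIn g ↑V w' := by
    simpa using (show PrefixProdsIn c ↑V ([x] ++ w') from hc).right
  obtain ⟨Cs, D, rfl, hCs, hD⟩ := List.exists_greedy_split (fun p => g * p.prod = g) w'
  obtain ⟨hCsV, hDV⟩ := hc'.of_flatten_append fun C hC => (hCs C hC).2.1
  have hw' : Cs.flatten ++ D <:+: x :: (Cs.flatten ++ D) := (List.suffix_cons _ _).isInfix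
  have hCw : ∀ C ∈ Cs, C <:+: Cs.flatten ++ D :=
    fun C hC => (List.infix_of_mem_flatten hC).trans (List.prefix_append _ _).isInfix
  have hpiece : ∀ v, v <:+: Cs.flatten ++ D → v ≠ [] → PrefixProdsIn g ↑V v →
      (∀ p, p <+: v → p ≠ [] → ¬ g * p.prod = g) →
      HasFactorization (4 * (V.erase g).card) v :=
    fun v hv hv0 hvV hvg => ih _ (Finset.erase_ssubset hg)
      ((Finset.coe_subset.2 (Finset.erase_subset _ _)).trans hV) g hv0 (hH.infix (hv.trans hw'))
      fun p hp hp0 => Finset.mem_erase.2 ⟨hvg p hp hp0, hvV p hp hp0⟩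
  have hblock : ∀ C ∈ Cs, HasFactorization (4 * (V.erase g).card + 1) C := fun C hC =>
    hasFactorization_of_dropLast (hCs C hC).1 fun hC0 =>
      hpiece _ ((List.dropLast_prefix C).isInfix.trans (hCw C hC)) hC0
        (fun p hp => hCsV C hC p (hp.trans (List.dropLast_prefix C))) (hCs C hC).2.2
  obtain ⟨e, he, hCe⟩ := HClass.exists_idempotent_of_mul_eq (hV hg) (xs := Cs.map List.prod)
    (by simpa using fun C hC => ⟨hH C ((hCw C hC).trans hw') (hCs C hC).1, (hCs C hC).2.1⟩)
  have hblocks : HasFactorization (4 * (V.erase g).card + 2) Cs.flatten :=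
    hasFactorization_flatten hblock fun _ => ⟨e, he, fun C hC => hCe _ (List.mem_map_of_mem hC)⟩
  have hK : 4 * (V.erase g).card + 4 = 4 * V.card := by
    rw [Finset.card_erase_of_mem hg]
    have := Finset.card_pos.2 ⟨g, hg⟩
    omega
  rw [← hK]
  exact hasFactorization_append (u := [x])
    (fun _ => (hasFactorization_singleton x).mono (by omega))
    (fun h0 => hasFactorization_append (fun _ => hblocks)
      (fun hD0 => (hpiece D (List.suffix_append _ _).isInfix hD0 hDV hD).mono (by omega)) h0)
    (by simp)

theorem hasFactorization_of_infixProdsIn_jClass [Fintype M] {d : M} (P : Finset (M × M))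
    {w : List M} (hw : w ≠ []) (hd : InfixProdsIn (JClass d) w)
    (hP : w.IsChain fun x y => (x, y) ∈ P) :
    HasFactorization (P.card * (4 * Fintype.card M + 2)) w := by
  classical
  induction P using Finset.strongInduction generalizing w with
  | H P ih =>
  obtain ⟨a, _ | ⟨b, u⟩, rfl⟩ := List.exists_cons_of_ne_nil hw
  · exact (hasFactorization_singleton a).mono (Nat.zero_le _)
  obtain ⟨hab, -⟩ := List.isChain_cons_cons.1 hP
  obtain ⟨Cs, D, hu, hCs, hD, hDc⟩ := List.exists_split_at_pair a b u
  have hsub : b :: u <:+: a :: b :: u := (List.suffix_cons _ _).isInfix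
  set K := (P.erase (a, b)).card * (4 * Fintype.card M + 2)
  have hpiece : ∀ v, v <:+: b :: u → v ≠ [] → (v.IsChain fun x y => ¬(x = a ∧ y = b)) →
      HasFactorization K v := fun v hv hv0 hvc =>
    ih _ (Finset.erase_ssubset hab) hv0 (hd.infix (hv.trans hsub))
      (((hP.infix (hv.trans hsub)).and hvc).imp fun x y h =>
        Finset.mem_erase.2 ⟨fun he => h.2 (Prod.mk.inj he), h.1⟩)
  have hCw : ∀ Ds, Ds <:+: Cs → Ds.flatten <:+: b :: u := fun Ds hDs =>
    hu ▸ (hDs.flatten).trans (List.prefix_append _ _).isInfix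
  have hH : InfixProdsIn (HClass a b) (Cs.map List.prod) := infixProdsIn_map_prod
    fun Ds hDs hDs0 =>
      have hends := List.head?_getLast?_flatten hDs0 fun C hC =>
        (hCs C (hDs.subset hC)).imp_right And.left
      mem_hClass_of_infixProdsIn_jClass (hd.infix ((hCw Ds hDs).trans hsub)) hends.1 hends.2
  have hblocks : Cs.flatten ≠ [] →
      HasFactorization (4 * Fintype.card M + K) Cs.flatten := by
    intro h0
    have hCs0 : Cs ≠ [] := by rintro rfl; simp at h0
    refine HasFactorization.flatten_of_prods ?_ fun C hC => hpiece C ?_ ?_ (hCs C hC).2.2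
    · refine (hasFactorization_of_infixProdsIn_hClass (Finset.univ.filter (· ∈ HClass a b))
        (by simp) 1 (by simpa using hCs0) hH (by simpa using hH.prefixProdsIn)).mono ?_
      exact Nat.mul_le_mul_left 4 (Finset.card_le_univ _)
    · simpa using hCw [C] ((List.singleton_infix_iff C Cs).2 hC)
    · exact fun hC0 => by simpa [hC0] using (hCs C hC).1
  have hK : K + (4 * Fintype.card M + 2) = P.card * (4 * Fintype.card M + 2) := by
    rw [← Finset.card_erase_add_one hab, Nat.add_mul, one_mul]
  rw [← hK, hu]
  refine (hasFactorization_append (k := 4 * Fintype.card M + K + 1) (u := [a])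
    (fun _ => (hasFactorization_singleton a).mono (by omega))
    (fun h0 => hasFactorization_append hblocks
      (fun hD0 => (hpiece D (hu ▸ (List.suffix_append _ _).isInfix) hD0 hDc).mono (by omega)) h0)
    (by simp)).mono (by omega)

theorem hasFactorization_of_infixProdsIn [Fintype M] (U : Finset M) {w : List M} (hw : w ≠ [])
    (hU : InfixProdsIn ↑U w) :
    HasFactorization (U.card * (Fintype.card (M × M) * (4 * Fintype.card M + 2) + 2)) w := by
  classical
  induction U using Finset.strongInduction generalizing w with
  | H U ih =>
  set KS := Fintype.card (M × M) * (4 * Fintype.card M + 2)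
  set d := w.prod
  have hd : d ∈ U := hU w (List.infix_refl w) hw
  have hU' : U.filter (fun z => ¬ JLe z d) ⊂ U :=
    Finset.filter_ssubset.2 ⟨d, hd, not_not.2 (JLe.refl d)⟩
  set K := (U.filter fun z => ¬ JLe z d).card * (KS + 2)
  obtain ⟨Cs, D, hw', hCs, hD⟩ := List.exists_greedy_split (fun p => JLe p.prod d) w
  have hpiece : ∀ v, v <:+: w → v ≠ [] →
      (∀ p, p <+: v → p ≠ [] → ¬ JLe p.prod d) → HasFactorization K v :=
    fun v hv hv0 hvd =>
    ih _ hU' hv0 fun z hz hz0 => Finset.mem_filter.2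
      ⟨hU z (hz.trans hv) hz0, not_jLe_prod_of_infix hvd hz hz0⟩
  have hCw : ∀ Ds, Ds <:+: Cs → Ds.flatten <:+: w := fun Ds hDs =>
    hw' ▸ (hDs.flatten).trans (List.prefix_append _ _).isInfix
  have hsmooth : InfixProdsIn (JClass d) (Cs.map List.prod) := infixProdsIn_map_prod
    fun Ds hDs hDs0 => by
      obtain ⟨C, Ds', rfl⟩ := List.exists_cons_of_ne_nil hDs0
      refine ⟨?_, jLe_prod_of_infix (hCw _ hDs)⟩
      rw [List.flatten_cons, List.prod_append]
      exact (jLe_mul_right _ _).trans (hCs C (hDs.subset (by simp))).2.1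
  have hblocks : Cs.flatten ≠ [] → HasFactorization (KS + (K + 1)) Cs.flatten := by
    intro h0
    have hCs0 : Cs ≠ [] := by rintro rfl; simp at h0
    refine HasFactorization.flatten_of_prods ?_ fun C hC =>
      hasFactorization_of_dropLast (hCs C hC).1 fun hC0 => hpiece _ ?_ hC0 (hCs C hC).2.2
    · simpa [KS] using hasFactorization_of_infixProdsIn_jClass Finset.univ
        (by simpa using hCs0) hsmooth
        (List.Pairwise.isChain (List.pairwise_of_forall fun _ _ => Finset.mem_univ _))
    · exact (List.dropLast_prefix C).isInfix.trans
        (by simpa using hCw [C] ((List.singleton_infix_iff C Cs).2 hC))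
  have hK : K + (KS + 2) ≤ U.card * (KS + 2) := by
    rw [← Nat.succ_mul]
    exact Nat.mul_le_mul_right _ (Finset.card_lt_card hU')
  rw [hw']
  refine (hasFactorization_append (k := KS + K + 1) (fun h0 => (hblocks h0).mono (by omega))
    (fun hD0 => (hpiece D (hw' ▸ (List.suffix_append _ _).isInfix) hD0 hD).mono (by omega))
    (hw' ▸ hw)).mono (by omega)

end FactorizationForest

/-- Simon's Factorization Forest Theorem. For every finite
monoid `M` there is a bound `k` (e.g. `k = 3|M|`) such that every nonempty
sequence over `M` is the yield of some factorization tree of height at most `k`. -/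
theorem factorization_forest {M : Type*} [Monoid M] [Fintype M] :
    ∃ k : ℕ, ∀ w : List M, w ≠ [] →
      ∃ t : FTree M, t.Valid ∧ t.yield = w ∧ t.height ≤ k :=
  ⟨_, fun _ hw => FactorizationForest.hasFactorization_of_infixProdsIn Finset.univ hw
    fun _ _ _ => Finset.mem_coe.2 (Finset.mem_univ _)⟩
end
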